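/- Uniform convergence theorem for the Kurzweil–Stieltjes integral: let g : [a,b] → ℝ have bounded variation, and let f_n : [a,b] → ℝ be such that (K)∫_a^b f_n dg exists for every n and f_n → f uniformly on [a,b]. Then (K)∫_a^b f dg exists and lim_{n→∞} (K)∫_a^b f_n dg = (K)∫_a^b f dg. -/

import Mathlib

open Set Filter

/-- A tagged partition of `[a,b]`: points `a = pts 0 < pts 1 < … < pts n = b`
with tags `tag j ∈ [pts j, pts (j+1)]`. -/
structure TaggedPartition (a b : ℝ) where
  n : ℕ
  pts : ℕ → ℝ
  tag : ℕ → ℝ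
  n_pos : 0 < n
  pts_zero : pts 0 = a
  pts_last : pts n = b
  pts_mono : ∀ j < n, pts j < pts (j + 1)
  tag_mem : ∀ j < n, tag j ∈ Set.Icc (pts j) (pts (j + 1))

/-- Riemann–Stieltjes sum `S(f, dg, P)`. -/
def RS (f g : ℝ → ℝ) {a b : ℝ} (P : TaggedPartition a b) : ℝ :=
  ∑ j ∈ Finset.range P.n, f (P.tag j) * (g (P.pts (j + 1)) - g (P.pts j))

/-- `P` is `δ`-fine. -/
def IsFine (δ : ℝ → ℝ) {a b : ℝ} (P : TaggedPartition a b) : Prop :=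
  ∀ j < P.n, Set.Icc (P.pts j) (P.pts (j + 1)) ⊆
    Set.Icc (P.tag j - δ (P.tag j)) (P.tag j + δ (P.tag j))

/-- The Kurzweil–Stieltjes integral `(K)∫_a^b f dg` exists and equals `I`. -/
def HasKS (f g : ℝ → ℝ) (a b I : ℝ) : Prop :=
  ∀ ε > 0, ∃ δ : ℝ → ℝ, (∀ t ∈ Set.Icc a b, 0 < δ t ∧ δ t < 1) ∧
    ∀ P : TaggedPartition a b, IsFine δ P → |RS f g P - I| < ε

/-- The division of `P` contains all points of the finite set `D`. -/
def Refines {a b : ℝ} (P : TaggedPartition a b) (D : Finset ℝ) : Prop :=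
  ∀ x ∈ D, ∃ j ≤ P.n, P.pts j = x

/-- All tags of `P` lie strictly inside the corresponding subintervals. -/
def InteriorTags {a b : ℝ} (P : TaggedPartition a b) : Prop :=
  ∀ j < P.n, P.pts j < P.tag j ∧ P.tag j < P.pts (j + 1)

/-- The Dushnik integral `(D)∫_a^b f dg` exists and equals `I`. -/
def HasDushnik (f g : ℝ → ℝ) (a b I : ℝ) : Prop :=
  ∀ ε > 0, ∃ D : Finset ℝ, ↑D ⊆ Set.Icc a b ∧
    ∀ P : TaggedPartition a b, Refines P D → InteriorTags P → |RS f g P - I| < ε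

/-- `f` is regulated on `[a,b]`: it has finite one-sided limits (within `[a,b]`)
at every point where they make sense. -/
def Regulated (f : ℝ → ℝ) (a b : ℝ) : Prop :=
  (∀ t ∈ Set.Ioc a b, ∃ L : ℝ, Filter.Tendsto f (nhdsWithin t (Set.Ico a t)) (nhds L)) ∧
  (∀ t ∈ Set.Ico a b, ∃ L : ℝ, Filter.Tendsto f (nhdsWithin t (Set.Ioc t b)) (nhds L))

/-- The Young sum `S_Y(f, dg, P)`, where `gl t = g(t-)` and `gr t = g(t+)`
are the one-sided limit functions of `g`. -/
def YS (f gl gr g : ℝ → ℝ) {a b : ℝ} (P : TaggedPartition a b) : ℝ :=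
  ∑ j ∈ Finset.range P.n,
    (f (P.pts j) * (gr (P.pts j) - g (P.pts j))
      + f (P.tag j) * (gl (P.pts (j + 1)) - gr (P.pts j))
      + f (P.pts (j + 1)) * (g (P.pts (j + 1)) - gl (P.pts (j + 1))))

/-- The Young integral `(Y)∫_a^b f dg` exists and equals `I` (here `gl`, `gr`
are the one-sided limit functions of `g`). -/
def HasYoung (f gl gr g : ℝ → ℝ) (a b I : ℝ) : Prop :=
  ∀ ε > 0, ∃ D : Finset ℝ, ↑D ⊆ Set.Icc a b ∧
    ∀ P : TaggedPartition a b, Refines P D → InteriorTags P → |YS f gl gr g P - I| < ε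

/-- `f` is a finite step function on `[a,b]`: constant on the open subintervals
of some division `a = σ 0 < … < σ m = b`. -/
def IsStepFunction (f : ℝ → ℝ) (a b : ℝ) : Prop :=
  ∃ (m : ℕ) (σ : ℕ → ℝ), 0 < m ∧ σ 0 = a ∧ σ m = b ∧ (∀ k < m, σ k < σ (k + 1)) ∧
    ∀ k < m, ∀ x ∈ Set.Ioo (σ k) (σ (k + 1)), ∀ y ∈ Set.Ioo (σ k) (σ (k + 1)), f x = f y

/-- The (real-valued) total variation of `g` on `[a,b]`. -/
noncomputable def var (g : ℝ → ℝ) (a b : ℝ) : ℝ :=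
  (eVariationOn g (Set.Icc a b)).toReal

/-!
Over a common partition that is fine for two gauges (Cousin's lemma), the Riemann–Stieltjes
sums of `f₁` and `f₂` differ by at most `sup |f₁ - f₂| · var g`; hence the integral is
Lipschitz in the sup norm with constant `var g`. Therefore the integrals `I n` form a Cauchy
sequence, and for its limit `J` the gauge of an `f n` close enough to `flim` (with `I n`
close to `J`) works for `flim` by a three-term estimate.
-/

namespace TaggedPartition

variable {a b : ℝ}

theorem pts_le_pts (P : TaggedPartition a b) {i j : ℕ} (hij : i ≤ j) (hj : j ≤ P.n) :
    P.pts i ≤ P.pts j := by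
  induction j, hij using Nat.le_induction with
  | base => exact le_rfl
  | succ k _ ih => exact (ih (by omega)).trans (P.pts_mono k (by omega)).le

theorem pts_mem_Icc (P : TaggedPartition a b) {j : ℕ} (hj : j ≤ P.n) :
    P.pts j ∈ Icc a b := by
  have h₀ := P.pts_le_pts (Nat.zero_le j) hj
  have h₁ := P.pts_le_pts hj le_rfl
  rw [P.pts_zero] at h₀
  rw [P.pts_last] at h₁
  exact ⟨h₀, h₁⟩

theorem tag_mem_Icc (P : TaggedPartition a b) {j : ℕ} (hj : j < P.n) : P.tag j ∈ Icc a b :=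
  ⟨(P.pts_mem_Icc hj.le).1.trans (P.tag_mem j hj).1,
    (P.tag_mem j hj).2.trans (P.pts_mem_Icc hj).2⟩

theorem left_le_right (P : TaggedPartition a b) : a ≤ b :=
  (P.pts_mem_Icc le_rfl).1.trans (P.pts_mem_Icc le_rfl).2

def single (a b t : ℝ) (hab : a < b) (ht : t ∈ Icc a b) : TaggedPartition a b where
  n := 1
  pts j := if j = 0 then a else b
  tag _ := t
  n_pos := one_pos
  pts_zero := by simp
  pts_last := by simp
  pts_mono j hj := by interval_cases j; simpa using hab
  tag_mem j hj := by interval_cases j; simpa using ht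

def snoc (P : TaggedPartition a b) (c t : ℝ) (hbc : b < c) (ht : t ∈ Icc b c) :
    TaggedPartition a c where
  n := P.n + 1
  pts j := if j ≤ P.n then P.pts j else c
  tag j := if j < P.n then P.tag j else t
  n_pos := Nat.succ_pos _
  pts_zero := by simp [P.pts_zero]
  pts_last := by simp
  pts_mono j hj := by
    rcases Nat.lt_or_ge j P.n with h | h
    · simpa [h.le, Nat.succ_le_of_lt h] using P.pts_mono j h
    · obtain rfl : j = P.n := by omega
      simpa [P.pts_last] using hbc
  tag_mem j hj := by
    rcases Nat.lt_or_ge j P.n with h | h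
    · simpa [h, h.le, Nat.succ_le_of_lt h] using P.tag_mem j h
    · obtain rfl : j = P.n := by omega
      simpa [P.pts_last] using ht

end TaggedPartition

open TaggedPartition

section Gauges

variable {δ : ℝ → ℝ} {a b : ℝ}

theorem IsFine.mono {δ' : ℝ → ℝ} {P : TaggedPartition a b} (hP : IsFine δ P)
    (hδ : ∀ t, δ t ≤ δ' t) : IsFine δ' P := fun j hj =>
  (hP j hj).trans (Icc_subset_Icc (by linarith [hδ (P.tag j)]) (by linarith [hδ (P.tag j)]))

theorem isFine_single {t : ℝ} (hab : a < b) (ht : t ∈ Icc a b)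
    (hcov : Icc a b ⊆ Icc (t - δ t) (t + δ t)) : IsFine δ (single a b t hab ht) := by
  intro j hj
  obtain rfl : j = 0 := by simpa [single] using hj
  simpa [single] using hcov

theorem IsFine.snoc {P : TaggedPartition a b} (hP : IsFine δ P) {c t : ℝ} (hbc : b < c)
    (ht : t ∈ Icc b c) (hcov : Icc b c ⊆ Icc (t - δ t) (t + δ t)) :
    IsFine δ (P.snoc c t hbc ht) := by
  intro j hj
  rcases Nat.lt_or_ge j P.n with h | h
  · simpa [TaggedPartition.snoc, h, h.le, Nat.succ_le_of_lt h] using hP j h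
  · obtain rfl : j = P.n := by simp only [TaggedPartition.snoc] at hj; omega
    simpa [TaggedPartition.snoc, P.pts_last] using hcov

/-- Cousin's lemma. The supremum `c` of the points `x` such that `[a, x]` has a `δ`-fine
partition is reached from some such `x > c - δ c` by one interval tagged at `c`. -/
theorem exists_isFine (hab : a < b) (hδ : ∀ t ∈ Icc a b, 0 < δ t) :
    ∃ P : TaggedPartition a b, IsFine δ P := by
  set S : Set ℝ := {x | x ∈ Ioc a b ∧ ∃ P : TaggedPartition a x, IsFine δ P}
  have hδa := hδ a (left_mem_Icc.2 hab.le)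
  have hbase : min b (a + δ a) ∈ S := by
    have hlt : a < min b (a + δ a) := lt_min hab (by linarith)
    refine ⟨⟨hlt, min_le_left _ _⟩, _, isFine_single hlt (left_mem_Icc.2 hlt.le) ?_⟩
    exact Icc_subset_Icc (by linarith) (min_le_right _ _)
  have hbdd : BddAbove S := ⟨b, fun x hx => hx.1.2⟩
  set c := sSup S
  have hcb : c ≤ b := csSup_le ⟨_, hbase⟩ fun x hx => hx.1.2
  have hac : a < c := (lt_min hab (by linarith)).trans_le (le_csSup hbdd hbase)
  have hδc := hδ c ⟨hac.le, hcb⟩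
  obtain ⟨x, hxS, hxc⟩ := exists_lt_of_lt_csSup ⟨_, hbase⟩ (show c - δ c < c by linarith)
  have hxc' : x ≤ c := le_csSup hbdd hxS
  obtain ⟨⟨hax, hxb⟩, P, hP⟩ := hxS
  rcases hxb.eq_or_lt with rfl | hxb
  · exact ⟨P, hP⟩
  set y := min b (c + δ c)
  have hxy : x < y := lt_min hxb (by linarith)
  have hcy : c ∈ Icc x y := ⟨hxc', le_min hcb (by linarith)⟩
  have hyS : y ∈ S := ⟨⟨hax.trans hxy, min_le_left _ _⟩, _,
    hP.snoc hxy hcy (Icc_subset_Icc (by linarith) (min_le_right _ _))⟩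
  have hyb : y = b := by
    by_contra hne
    have : y = c + δ c := (min_choice b (c + δ c)).resolve_left hne
    linarith [le_csSup hbdd hyS]
  rw [← hyb]
  exact hyS.2

end Gauges

section Integral

variable {a b : ℝ} {g : ℝ → ℝ}

theorem sum_abs_sub_le_var (hg : BoundedVariationOn g (Icc a b)) (P : TaggedPartition a b) :
    ∑ j ∈ Finset.range P.n, |g (P.pts (j + 1)) - g (P.pts j)| ≤ var g a b := by
  have hsum := eVariationOn.sum_le_of_monotoneOn_Icc (f := g) (m := 0) (n := P.n)
    (fun i hi j hj hij => P.pts_le_pts hij hj.2) fun i hi => P.pts_mem_Icc hi.2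
  simp only [← Finset.range_eq_Ico, edist_dist, Real.dist_eq] at hsum
  rw [← ENNReal.ofReal_sum_of_nonneg fun j _ => abs_nonneg _] at hsum
  exact (ENNReal.ofReal_le_iff_le_toReal hg).mp hsum

theorem RS_sub (f₁ f₂ : ℝ → ℝ) (P : TaggedPartition a b) :
    RS (f₁ - f₂) g P = RS f₁ g P - RS f₂ g P := by
  simp only [RS, Pi.sub_apply, sub_mul, Finset.sum_sub_distrib]

theorem abs_RS_le (hg : BoundedVariationOn g (Icc a b)) (P : TaggedPartition a b) {f : ℝ → ℝ}
    {c : ℝ} (hf : ∀ t ∈ Icc a b, |f t| ≤ c) : |RS f g P| ≤ c * var g a b := by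
  have hc : 0 ≤ c := (abs_nonneg _).trans (hf a (left_mem_Icc.2 P.left_le_right))
  calc |RS f g P|
      ≤ ∑ j ∈ Finset.range P.n, |f (P.tag j) * (g (P.pts (j + 1)) - g (P.pts j))| :=
        Finset.abs_sum_le_sum_abs _ _
    _ = ∑ j ∈ Finset.range P.n, |f (P.tag j)| * |g (P.pts (j + 1)) - g (P.pts j)| := by
        simp only [abs_mul]
    _ ≤ ∑ j ∈ Finset.range P.n, c * |g (P.pts (j + 1)) - g (P.pts j)| := by
        gcongr with j hj
        exact hf _ (P.tag_mem_Icc (Finset.mem_range.mp hj))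
    _ ≤ c * var g a b := by
        rw [← Finset.mul_sum]
        exact mul_le_mul_of_nonneg_left (sum_abs_sub_le_var hg P) hc

theorem abs_RS_sub_RS_le (hg : BoundedVariationOn g (Icc a b)) (P : TaggedPartition a b)
    {f₁ f₂ : ℝ → ℝ} {c : ℝ} (hf : ∀ t ∈ Icc a b, |f₁ t - f₂ t| ≤ c) :
    |RS f₁ g P - RS f₂ g P| ≤ c * var g a b := by
  rw [← RS_sub]
  exact abs_RS_le hg P hf

theorem HasKS.abs_sub_le_mul_var {f₁ f₂ : ℝ → ℝ} {I₁ I₂ c : ℝ} (hab : a < b)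
    (hg : BoundedVariationOn g (Icc a b)) (h₁ : HasKS f₁ g a b I₁) (h₂ : HasKS f₂ g a b I₂)
    (hf : ∀ t ∈ Icc a b, |f₁ t - f₂ t| ≤ c) : |I₁ - I₂| ≤ c * var g a b := by
  refine le_of_forall_pos_lt_add fun ε hε => ?_
  obtain ⟨δ₁, hδ₁, hP₁⟩ := h₁ (ε / 2) (half_pos hε)
  obtain ⟨δ₂, hδ₂, hP₂⟩ := h₂ (ε / 2) (half_pos hε)
  obtain ⟨P, hP⟩ := exists_isFine (δ := fun t => min (δ₁ t) (δ₂ t)) hab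
    fun t ht => lt_min (hδ₁ t ht).1 (hδ₂ t ht).1
  have e₁ := hP₁ P (hP.mono fun t => min_le_left _ _)
  have e₂ := hP₂ P (hP.mono fun t => min_le_right _ _)
  have e := abs_RS_sub_RS_le hg P hf
  rw [abs_lt] at e₁ e₂ ⊢
  rw [abs_le] at e
  constructor <;> linarith

theorem cauchySeq_of_uniformCauchySeqOn {f : ℕ → ℝ → ℝ} {I : ℕ → ℝ} (hab : a < b)
    (hg : BoundedVariationOn g (Icc a b)) (hfn : ∀ n, HasKS (f n) g a b (I n))
    (hunif : UniformCauchySeqOn f atTop (Icc a b)) : CauchySeq I := by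
  have hV : 0 ≤ var g a b := ENNReal.toReal_nonneg
  refine Metric.cauchySeq_iff'.2 fun ε hε => ?_
  have hη : 0 < ε / (var g a b + 1) := by positivity
  obtain ⟨N, hN⟩ := Metric.uniformCauchySeqOn_iff.mp hunif _ hη
  refine ⟨N, fun n hn => ?_⟩
  rw [Real.dist_eq]
  calc |I n - I N| ≤ ε / (var g a b + 1) * var g a b :=
        (hfn n).abs_sub_le_mul_var hab hg (hfn N) fun t ht => by
          simpa only [Real.dist_eq] using (hN n hn N le_rfl t ht).le
    _ < ε := by
        rw [div_mul_eq_mul_div, div_lt_iff₀ (by positivity)]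
        linarith

theorem HasKS.of_tendstoUniformlyOn {f : ℕ → ℝ → ℝ} {flim : ℝ → ℝ} {I : ℕ → ℝ} {J : ℝ}
    (hg : BoundedVariationOn g (Icc a b)) (hfn : ∀ n, HasKS (f n) g a b (I n))
    (hunif : TendstoUniformlyOn f flim atTop (Icc a b)) (hI : Tendsto I atTop (nhds J)) :
    HasKS flim g a b J := by
  intro ε hε
  have hV : 0 ≤ var g a b := ENNReal.toReal_nonneg
  set η := ε / (var g a b + 2)
  have hη : 0 < η := by positivity
  obtain ⟨n, hfn_close, hIn⟩ :=
    ((Metric.tendstoUniformlyOn_iff.mp hunif η hη).and (hI (Metric.ball_mem_nhds J hη))).exists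
  obtain ⟨δ, hδ, hPδ⟩ := hfn n η hη
  refine ⟨δ, hδ, fun P hP => ?_⟩
  have e₁ : |RS flim g P - RS (f n) g P| ≤ η * var g a b :=
    abs_RS_sub_RS_le hg P fun t ht => by simpa only [Real.dist_eq] using (hfn_close t ht).le
  have e₂ : |RS (f n) g P - I n| < η := hPδ P hP
  have e₃ : |I n - J| < η := by simpa only [Metric.mem_ball, Real.dist_eq] using hIn
  calc |RS flim g P - J|
      ≤ |RS flim g P - RS (f n) g P| + |RS (f n) g P - I n| + |I n - J| := by
        linarith [abs_sub_le (RS flim g P) (RS (f n) g P) J, abs_sub_le (RS (f n) g P) (I n) J]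
    _ < η * var g a b + η + η := by linarith
    _ = ε := by simp only [η]; field_simp; ring

end Integral

/-- uniform convergence theorem for the Kurzweil–Stieltjes
integral. -/
theorem stmt13 (a b : ℝ) (hab : a < b) (g : ℝ → ℝ)
    (hg : BoundedVariationOn g (Set.Icc a b))
    (f : ℕ → ℝ → ℝ) (flim : ℝ → ℝ) (I : ℕ → ℝ)
    (hfn : ∀ n, HasKS (f n) g a b (I n))
    (hunif : TendstoUniformlyOn f flim Filter.atTop (Set.Icc a b)) :
    ∃ J : ℝ, HasKS flim g a b J ∧ Filter.Tendsto I Filter.atTop (nhds J) := by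
  obtain ⟨J, hJ⟩ := cauchySeq_tendsto_of_complete
    (cauchySeq_of_uniformCauchySeqOn hab hg hfn hunif.uniformCauchySeqOn)
  exact ⟨J, HasKS.of_tendstoUniformlyOn hg hfn hunif hJ, hJ⟩
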